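/- Let w, r, t, d, m ∈ ℕ with m ≥ 2 and d ≥ 1, and suppose Δ^w_r contains m vectors with pairwise d₁-distance at least d. Then N̄_t(m,w,r,d) = C(w + t − σ(m,w,r,d), w), where the binomial coefficient is taken to be 0 when t < σ(m,w,r,d). -/
import Mathlib


open scoped BigOperators Classical
open Filter

namespace TandemDup

variable {S : Type} [Fintype S] [DecidableEq S] [Ring S]

/-- A single tandem duplication with window length `k`:
`a = xyz` with `|y| = k` is mapped to `b = xyyz`. -/
def Dup (k : ℕ) (a b : List S) : Prop :=
  ∃ x y z : List S, y.length = k ∧ a = x ++ y ++ z ∧ b = x ++ y ++ y ++ z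

/-- `DescN k t x y` : `y` is a `t`-descendant of `x`. -/
def DescN (k : ℕ) : ℕ → List S → List S → Prop
  | 0, a, b => a = b
  | t + 1, a, b => ∃ c, DescN k t a c ∧ Dup k c b

/-- The set `D^t(x)` of `t`-descendants of `x`. -/
def DSet (k t : ℕ) (x : List S) : Set (List S) := {y | DescN k t x y}

/-- The descendant cone `D^*(x)`. -/
def DStar (k : ℕ) (x : List S) : Set (List S) := ⋃ t : ℕ, DSet k t x

/-- A string of length at least `k` is irreducible if it has no ancestor other than itself. -/
def Irred (k : ℕ) (x : List S) : Prop :=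
  k ≤ x.length ∧ ∀ z : List S, x ∈ DStar k z → z = x

/-- The duplication root `rt(y)`: an irreducible ancestor of `y` (unique, by the theory). -/
noncomputable def rt (k : ℕ) (y : List S) : List S :=
  if h : ∃ x : List S, Irred k x ∧ y ∈ DStar k x then h.choose else y

/-- The (non-anchor part of the) discrete derivative `φ̄(x)`. -/
def phiBar (k : ℕ) (x : List S) : List S :=
  (List.range (x.length - k)).map (fun i => x.getD (i + k) 0 - x.getD i 0)

/-- Hamming weight of a string: the number of its nonzero letters. -/
def wtH (l : List S) : ℕ := (l.filter (fun a => decide (a ≠ 0))).length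

/-- `w(x) := wt_H(φ̄(x))`. -/
def wgt (k : ℕ) (x : List S) : ℕ := wtH (phiBar k x)

/-- `r(x) := (|x| - |rt(x)|)/k`, the number of duplications taking `rt(x)` to `x`. -/
noncomputable def rr (k : ℕ) (x : List S) : ℕ := (x.length - (rt k x).length) / k

/-- The typicality condition on the weight `w`. -/
def wTypical (q k n w : ℕ) : Prop :=
  |(w : ℝ) - (((q : ℝ) - 1) / (q : ℝ)) * ((n : ℝ) - (k : ℝ))| < (n : ℝ) ^ ((3 : ℝ) / 4)

/-- The typicality condition on the number of duplications `r`. -/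
def rTypical (q k n r : ℕ) : Prop :=
  |(r : ℝ) - (((q : ℝ) - 1) / ((q : ℝ) * ((q : ℝ) ^ k - 1))) * ((n : ℝ) - (k : ℝ))|
    < 2 * (n : ℝ) ^ ((3 : ℝ) / 4)

/-- The typical set `typ^n`. -/
def typ (k n : ℕ) : Set (List S) :=
  {x | x.length = n ∧ wTypical (Fintype.card S) k n (wgt k x) ∧
    rTypical (Fintype.card S) k n (rr k x)}

/-- The uncertainty `N_t(m, C)`: the maximal size of `⋂ᵢ D^t(xᵢ)` over pairwise
distinct `x₁, …, x_m ∈ C`. -/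
noncomputable def Nt (k t m : ℕ) (C : Set (List S)) : ℕ :=
  sSup { N : ℕ | ∃ f : Fin m → List S, Function.Injective f ∧ (∀ i, f i ∈ C) ∧
    N = (⋂ i, DSet k t (f i)).ncard }

/-- `S̄_t(u₁, …, u_m) = ⋂ᵢ {v : v ≥ uᵢ, ‖v - uᵢ‖₁ = t}`. -/
def Sbar (w t : ℕ) {m : ℕ} (u : Fin m → (Fin (w + 1) → ℕ)) : Set (Fin (w + 1) → ℕ) :=
  ⋂ i, {v | u i ≤ v ∧ ∑ j, (v j - u i j) = t}

/-- `N̄_t(m, w, r)`. -/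
noncomputable def Nbar (t m w r : ℕ) : ℕ :=
  sSup { N : ℕ | ∃ u : Fin m → (Fin (w + 1) → ℕ), Function.Injective u ∧
    (∀ i, ∑ j, u i j = r) ∧ N = (Sbar w t u).ncard }

/-- The minimum supremum height `σ(m, w, r)`. -/
noncomputable def sigma (m w r : ℕ) : ℕ :=
  sInf { s : ℕ | ∃ u : Fin m → (Fin (w + 1) → ℕ), Function.Injective u ∧
    (∀ i, ∑ j, u i j = r) ∧ (∑ j, Finset.univ.sup fun i => u i j) = r + s }

/-- The lower-bounds set `A_r(u)`. -/
def lbs (w r : ℕ) (u : Fin (w + 1) → ℕ) : Set (Fin (w + 1) → ℕ) :=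
  {v | (∑ j, v j) = r ∧ v ≤ u}

/-- The maximal lower-bounds-set size `μ(w, r, s)`. -/
noncomputable def mu (w r s : ℕ) : ℕ :=
  sSup { N : ℕ | ∃ u : Fin (w + 1) → ℕ, (∑ j, u j) = r + s ∧ N = (lbs w r u).ncard }

/-- Twice the distance `d₁`, i.e. the `ℓ₁`-distance `‖u - v‖₁` on `ℕ^{w+1}`. -/
def l1dist {w : ℕ} (u v : Fin (w + 1) → ℕ) : ℕ :=
  ∑ j, ((u j - v j) + (v j - u j))

/-- `N̄_t(m, w, r, d)`. -/
noncomputable def NbarD (t m w r d : ℕ) : ℕ :=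
  sSup { N : ℕ | ∃ u : Fin m → (Fin (w + 1) → ℕ),
    (∀ i, ∑ j, u i j = r) ∧ (∀ i j, i ≠ j → 2 * d ≤ l1dist (u i) (u j)) ∧
    N = (Sbar w t u).ncard }

/-- `σ(m, w, r, d)`. -/
noncomputable def sigmaD (m w r d : ℕ) : ℕ :=
  sInf { s : ℕ | ∃ u : Fin m → (Fin (w + 1) → ℕ),
    (∀ i, ∑ j, u i j = r) ∧ (∀ i j, i ≠ j → 2 * d ≤ l1dist (u i) (u j)) ∧
    (∑ j, Finset.univ.sup fun i => u i j) = r + s }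

/-- `μ(w, r, s, d)`. -/
noncomputable def muD (w r s d : ℕ) : ℕ :=
  sSup { N : ℕ | ∃ u : Fin (w + 1) → ℕ, (∑ j, u j) = r + s ∧
    ∃ C : Set (Fin (w + 1) → ℕ), C ⊆ lbs w r u ∧
      (∀ v₁ ∈ C, ∀ v₂ ∈ C, v₁ ≠ v₂ → 2 * d ≤ l1dist v₁ v₂) ∧ N = C.ncard }

/-- The duplication distance `d(y₁, y₂)`. -/
noncomputable def distDup (k : ℕ) (y₁ y₂ : List S) : ℕ :=
  sInf {t : ℕ | (DSet k t y₁ ∩ DSet k t y₂).Nonempty}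

/-- `N^typ_t(m, n, d)`. -/
noncomputable def NtypD (k t m n d : ℕ) : ℕ :=
  sSup { N : ℕ | ∃ f : Fin m → List S, (∀ i, f i ∈ typ k n) ∧
    (∀ i j, i ≠ j → d ≤ distDup k (f i) (f j)) ∧
    N = (⋂ i, DSet k t (f i)).ncard }

/-- `A(ν, D, ω)`: the maximum size of a binary code of length `ν`, constant Hamming
weight `ω`, and minimum Hamming distance `D`. -/
noncomputable def Abin (ν D ω : ℕ) : ℕ :=
  sSup { N : ℕ | ∃ C : Set (Fin ν → ZMod 2), (∀ x ∈ C, hammingNorm x = ω) ∧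
    (∀ x ∈ C, ∀ y ∈ C, x ≠ y → D ≤ hammingDist x y) ∧ N = C.ncard }

/-- Zero-run-length representation: `ψ_x(y)` as a list, mapping `φ̄(y)` written as
`0^{u(1)} a₁ 0^{u(2)} … a_w 0^{u(w+1)}` (with the `aᵢ` nonzero) to
`(⌊u(1)/k⌋, …, ⌊u(w+1)/k⌋)`. -/
def psiList (k : ℕ) (y : List S) : List ℕ :=
  ((phiBar k y).splitOnP (fun a => decide (a ≠ 0))).map (fun run => run.length / k)

/-- `ψ_x(y)` as a vector in `ℕ^{w+1}`. -/
def psiVec (k w : ℕ) (y : List S) : Fin (w + 1) → ℕ := fun i => (psiList k y).getD i 0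

/-- `s = ⌈log_n m⌉`. -/
noncomputable def sExp (n m : ℕ) : ℕ := ⌈Real.logb n m⌉₊

/-- The indicator `δ(m, n)` of Theorem 17. -/
noncomputable def deltaTyp (q k n m : ℕ) : ℕ :=
  if ∀ r : ℕ, rTypical q k n r → Nat.choose (r + sExp n m) r < m then 1 else 0

/-- `s = ⌈log_n m⌉ + d - 1`. -/
noncomputable def sExpD (n m d : ℕ) : ℕ := sExp n m + (d - 1)

/-- The indicator `δ(m, n, d)` of Theorem 29. -/
noncomputable def deltaEcc (q k d n m : ℕ) : ℕ :=
  if ∀ r : ℕ, rTypical q k n r → Abin (r + sExpD n m d) (2 * d) (sExpD n m d) < m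
  then 1 else 0


/-- aux -/

noncomputable def sumEquivSym (n T : ℕ) :
    {x : Fin n → ℕ // ∑ j, x j = T} ≃ Sym (Fin n) T where
  toFun x := ⟨(Finsupp.equivFunOnFinite.symm x.1).toMultiset, by
    rw [Finsupp.card_toMultiset, Finsupp.sum_fintype]
    · simpa using x.2
    · intro; rfl⟩
  invFun s := ⟨fun i => s.1.count i, by rw [Multiset.sum_count_eq_card] <;> simp [s.2]⟩
  left_inv x := by ext i; simp [Finsupp.count_toMultiset]
  right_inv s := by ext a; simp [Finsupp.count_toMultiset]

lemma ncard_sum_eq (w T : ℕ) :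
    {x : Fin (w + 1) → ℕ | ∑ j, x j = T}.ncard = (w + T).choose w := by
  rw [← Nat.card_coe_set_eq]
  rw [Nat.card_congr ((Equiv.refl _).subtypeEquiv (fun x => Iff.rfl) :
    ↑{x : Fin (w+1) → ℕ | ∑ j, x j = T} ≃ {x : Fin (w+1) → ℕ // ∑ j, x j = T})]
  rw [Nat.card_congr (sumEquivSym (w + 1) T), Nat.card_eq_fintype_card, Sym.card_sym_eq_choose]
  have : Fintype.card (Fin (w + 1)) + T - 1 = w + T := by simp
  rw [this]
  exact (Nat.choose_symm_add).symm

/-- counting the upper set intersected with a level set -/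
lemma ncard_upper (w R : ℕ) (U : Fin (w + 1) → ℕ) (h : ∑ j, U j ≤ R) :
    {v : Fin (w + 1) → ℕ | U ≤ v ∧ ∑ j, v j = R}.ncard
      = (w + (R - ∑ j, U j)).choose w := by
  have himg : {v : Fin (w + 1) → ℕ | U ≤ v ∧ ∑ j, v j = R}
      = (fun x => U + x) '' {x : Fin (w + 1) → ℕ | ∑ j, x j = R - ∑ j, U j} := by
    ext v
    constructor
    · rintro ⟨hUv, hv⟩
      refine ⟨fun j => v j - U j, ?_, ?_⟩
      · rw [Set.mem_setOf_eq, ← hv, Finset.sum_tsub_distrib]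
        intro j _; exact hUv j
      · funext j; exact Nat.add_sub_cancel' (hUv j)
    · rintro ⟨x, hx, rfl⟩
      refine ⟨fun j => Nat.le_add_right _ _, ?_⟩
      have : ∑ j, (U + x) j = ∑ j, U j + ∑ j, x j := by
        simp [Finset.sum_add_distrib]
      show ∑ j, (U + x) j = R
      rw [this, Set.mem_setOf_eq.mp hx, Nat.add_sub_cancel' h]
  rw [himg, Set.ncard_image_of_injective _ (add_right_injective U), ncard_sum_eq]

lemma Sbar_eq (w t r : ℕ) {m : ℕ} (hm : 0 < m) (u : Fin m → (Fin (w + 1) → ℕ))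
    (hr : ∀ i, ∑ j, u i j = r) :
    Sbar w t u = {v | (fun j => Finset.univ.sup fun i => u i j) ≤ v ∧ ∑ j, v j = r + t} := by
  ext v
  simp only [Sbar, Set.mem_iInter, Set.mem_setOf_eq]
  constructor
  · intro h
    have i0 : Fin m := ⟨0, hm⟩
    obtain ⟨hle, hsum⟩ := h i0
    have hsub : ∑ j, (v j - u i0 j) = ∑ j, v j - ∑ j, u i0 j :=
      Finset.sum_tsub_distrib Finset.univ (fun j _ => hle j)
    have hv : ∑ j, v j = r + t := by
      rw [hsub, hr i0] at hsum
      have : r ≤ ∑ j, v j := (hr i0) ▸ Finset.sum_le_sum (fun j _ => hle j)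
      omega
    refine ⟨fun j => ?_, hv⟩
    exact Finset.sup_le (fun i _ => (h i).1 j)
  · rintro ⟨hle, hv⟩
    intro i
    have hle' : u i ≤ v := fun j =>
      le_trans (Finset.le_sup (f := fun i => u i j) (Finset.mem_univ i)) (hle j)
    refine ⟨hle', ?_⟩
    rw [Finset.sum_tsub_distrib Finset.univ (fun j _ => hle' j), hv, hr i]
    omega

/-- the value of `|Sbar|` in terms of the excess of the supremum. -/
lemma Sbar_ncard (w t r : ℕ) {m : ℕ} (hm : 0 < m) (u : Fin m → (Fin (w + 1) → ℕ))
    (hr : ∀ i, ∑ j, u i j = r) :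
    (Sbar w t u).ncard =
      if (∑ j, Finset.univ.sup fun i => u i j) - r ≤ t then
        (w + (t - ((∑ j, Finset.univ.sup fun i => u i j) - r))).choose w
      else 0 := by
  set U : Fin (w + 1) → ℕ := fun j => Finset.univ.sup fun i => u i j with hU
  have hrU : r ≤ ∑ j, U j := by
    have i0 : Fin m := ⟨0, hm⟩
    calc r = ∑ j, u i0 j := (hr i0).symm
    _ ≤ ∑ j, U j := Finset.sum_le_sum (fun j _ =>
        Finset.le_sup (f := fun i => u i j) (Finset.mem_univ i0))
  rw [Sbar_eq w t r hm u hr]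
  by_cases hc : (∑ j, U j) - r ≤ t
  · rw [if_pos hc]
    have h2 : ∑ j, U j ≤ r + t := by omega
    rw [ncard_upper w (r + t) U h2]
    have he : Finset.univ.sum U = ∑ j, U j := rfl
    congr 1
    omega
  · rw [if_neg hc]
    have : {v : Fin (w + 1) → ℕ | U ≤ v ∧ ∑ j, v j = r + t} = ∅ := by
      ext v
      simp only [Set.mem_setOf_eq, Set.mem_empty_iff_false, iff_false, not_and]
      intro hle hv
      have : ∑ j, U j ≤ ∑ j, v j := Finset.sum_le_sum (fun j _ => hle j)
      omega
    rw [this, Set.ncard_empty]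

theorem statement15 (w r t d m : ℕ) (hm : 2 ≤ m) (hd : 1 ≤ d)
    (hex : ∃ u : Fin m → (Fin (w + 1) → ℕ),
      (∀ i, ∑ j, u i j = r) ∧ ∀ i j, i ≠ j → 2 * d ≤ l1dist (u i) (u j)) :
    NbarD t m w r d =
      if sigmaD m w r d ≤ t then Nat.choose (w + t - sigmaD m w r d) w else 0 := by
  classical
  have hm0 : 0 < m := by omega
  obtain ⟨u₀, hu₀r, hu₀d⟩ := hex
  have hU0 : r ≤ ∑ j, Finset.univ.sup fun i => u₀ i j := by
    have i0 : Fin m := ⟨0, hm0⟩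
    calc r = ∑ j, u₀ i0 j := (hu₀r i0).symm
    _ ≤ _ := Finset.sum_le_sum (fun j _ =>
        Finset.le_sup (f := fun i => u₀ i j) (Finset.mem_univ i0))
  have hne : {s : ℕ | ∃ u : Fin m → (Fin (w + 1) → ℕ),
      (∀ i, ∑ j, u i j = r) ∧ (∀ i j, i ≠ j → 2 * d ≤ l1dist (u i) (u j)) ∧
      (∑ j, Finset.univ.sup fun i => u i j) = r + s}.Nonempty :=
    ⟨(∑ j, Finset.univ.sup fun i => u₀ i j) - r, u₀, hu₀r, hu₀d, by omega⟩
  have hσmem : ∃ u : Fin m → (Fin (w + 1) → ℕ),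
      (∀ i, ∑ j, u i j = r) ∧ (∀ i j, i ≠ j → 2 * d ≤ l1dist (u i) (u j)) ∧
      (∑ j, Finset.univ.sup fun i => u i j) = r + sigmaD m w r d := Nat.sInf_mem hne
  obtain ⟨u₁, hu₁r, hu₁d, hu₁s⟩ := hσmem
  -- every admissible config has ncard ≤ value at σ
  have hmono : ∀ s s' : ℕ, s ≤ s' →
      (if s' ≤ t then (w + (t - s')).choose w else 0)
      ≤ (if s ≤ t then (w + (t - s)).choose w else 0) := by
    intro s s' hss
    by_cases h' : s' ≤ t
    · rw [if_pos h', if_pos (le_trans hss h')]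
      exact Nat.choose_le_choose _ (by omega)
    · rw [if_neg h']
      exact Nat.zero_le _
  have key : ∀ (u : Fin m → (Fin (w + 1) → ℕ)), (∀ i, ∑ j, u i j = r) →
      (∀ i j, i ≠ j → 2 * d ≤ l1dist (u i) (u j)) → (Sbar w t u).ncard ≤
      (if sigmaD m w r d ≤ t then (w + (t - sigmaD m w r d)).choose w else 0) := by
    intro u hur hud
    have hrU : r ≤ ∑ j, Finset.univ.sup fun i => u i j := by
      have i0 : Fin m := ⟨0, hm0⟩
      calc r = ∑ j, u i0 j := (hur i0).symm
      _ ≤ _ := Finset.sum_le_sum (fun j _ =>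
          Finset.le_sup (f := fun i => u i j) (Finset.mem_univ i0))
    have hs : sigmaD m w r d ≤ (∑ j, Finset.univ.sup fun i => u i j) - r :=
      Nat.sInf_le ⟨u, hur, hud, by omega⟩
    rw [Sbar_ncard w t r hm0 u hur]
    exact hmono _ _ hs
  have hach : (Sbar w t u₁).ncard =
      (if sigmaD m w r d ≤ t then (w + (t - sigmaD m w r d)).choose w else 0) := by
    rw [Sbar_ncard w t r hm0 u₁ hu₁r, hu₁s]
    have h1 : r + sigmaD m w r d - r = sigmaD m w r d := by omega
    rw [h1]
  have hmem : (if sigmaD m w r d ≤ t then (w + (t - sigmaD m w r d)).choose w else 0)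
      ∈ { N : ℕ | ∃ u : Fin m → (Fin (w + 1) → ℕ),
      (∀ i, ∑ j, u i j = r) ∧ (∀ i j, i ≠ j → 2 * d ≤ l1dist (u i) (u j)) ∧
      N = (Sbar w t u).ncard } := ⟨u₁, hu₁r, hu₁d, hach.symm⟩
  have hbdd : ∀ N ∈ { N : ℕ | ∃ u : Fin m → (Fin (w + 1) → ℕ),
      (∀ i, ∑ j, u i j = r) ∧ (∀ i j, i ≠ j → 2 * d ≤ l1dist (u i) (u j)) ∧
      N = (Sbar w t u).ncard },
      N ≤ (if sigmaD m w r d ≤ t then (w + (t - sigmaD m w r d)).choose w else 0) := by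
    rintro N ⟨u, hur, hud, rfl⟩
    exact key u hur hud
  have hval : NbarD t m w r d
      = (if sigmaD m w r d ≤ t then (w + (t - sigmaD m w r d)).choose w else 0) := by
    rw [NbarD]
    exact le_antisymm (csSup_le ⟨_, hmem⟩ hbdd) (le_csSup ⟨_, hbdd⟩ hmem)
  rw [hval]
  split_ifs with h
  · congr 1
    omega
  · rfl

end TandemDup
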